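/- arXiv:math/0411549 — 3 statements merged into one kernel-verified Lean document; each statement's English description precedes it below -/
import Mathlib

section
/- Let H be the 2×2 matrix of rational 1-forms in (u,t) with rows (0, 0) and (dt/(ut(1+t)), du/u + dt/(2t)). Then dH + H ∧ H = 0. -/
/-!
Only the second row of `H` is nonzero, so `dH + H ∧ H` reduces to two conditions on its
entries `a = dt/(ut(1+t))` and `b = du/u + dt/(2t)`: `db = 0` and `da + b ∧ a = 0`. Both follow
from `d(f dg) = df ∧ dg`: each term of `b` has the form `φ(g) dg`, hence is closed, while
`da = -(ut(1+t))⁻² t(1+t) du ∧ dt = -u⁻¹ (ut(1+t))⁻¹ du ∧ dt = -b ∧ a`.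
-/

section Curvature

variable {F Ω Ω2 : Type*} [Field F] [AddCommGroup Ω] [Module F Ω] [AddCommGroup Ω2] [Module F Ω2]

def curvature {ι : Type*} [Fintype ι] (d1 : Ω →+ Ω2) (w : Ω →ₗ[F] Ω →ₗ[F] Ω2)
    (H : Matrix ι ι Ω) : Matrix ι ι Ω2 :=
  Matrix.of fun i j => d1 (H i j) + ∑ k, w (H i k) (H k j)

theorem curvature_of_zero_row (d1 : Ω →+ Ω2) {w : Ω →ₗ[F] Ω →ₗ[F] Ω2} (hw : w.IsAlt)
    (a b : Ω) : curvature d1 w !![0, 0; a, b] = !![0, 0; d1 a + w b a, d1 b] := by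
  ext i j
  fin_cases i <;> fin_cases j <;> simp [curvature, Fin.sum_univ_two, hw.self_eq_zero]

variable {d : Derivation ℤ F Ω} {w : Ω →ₗ[F] Ω →ₗ[F] Ω2} {d1 : Ω →+ Ω2}

theorem d1_smul_d (hleib : ∀ (f : F) (η : Ω), d1 (f • η) = w (d f) η + f • d1 η)
    (hdd : ∀ f : F, d1 (d f) = 0) (f g : F) : d1 (f • d g) = w (d f) (d g) := by
  rw [hleib, hdd, smul_zero, add_zero]

theorem d1_inv_smul_d_add_inv_two_mul_smul_d_eq_zero (hw : w.IsAlt)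
    (hd1 : ∀ f g : F, d1 (f • d g) = w (d f) (d g)) (u t : F) :
    d1 (u⁻¹ • d u + (2 * t)⁻¹ • d t) = 0 := by
  have hd2 : d (2 : F) = 0 := by exact_mod_cast d.map_natCast 2
  simp [hd1, Derivation.leibniz_inv, Derivation.leibniz, hd2, hw.self_eq_zero]

theorem d1_smul_d_add_wedge_eq_zero (hw : w.IsAlt)
    (hd1 : ∀ f g : F, d1 (f • d g) = w (d f) (d g)) (u t : F) :
    d1 ((u * t * (1 + t))⁻¹ • d t) +
      w (u⁻¹ • d u + (2 * t)⁻¹ • d t) ((u * t * (1 + t))⁻¹ • d t) = 0 := by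
  simp only [mul_inv_rev, hd1, Derivation.leibniz, Derivation.leibniz_inv, inv_pow, neg_smul,
    smul_neg, smul_add, map_add, Derivation.map_one_eq_zero, zero_add, map_neg, map_smul,
    LinearMap.add_apply, LinearMap.neg_apply, LinearMap.smul_apply, hw.self_eq_zero, smul_zero,
    neg_zero, add_zero]
  match_scalars
  ring

end Curvature

theorem stmt7_general (F : Type*) [Field F]
    (Ω Ω2 : Type*) [AddCommGroup Ω] [Module F Ω] [AddCommGroup Ω2] [Module F Ω2]
    (d : Derivation ℤ F Ω)
    (w : Ω →ₗ[F] Ω →ₗ[F] Ω2) (halt : ∀ η : Ω, w η η = 0)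
    (d1 : Ω →+ Ω2)
    (hleib : ∀ (f : F) (η : Ω), d1 (f • η) = w (d f) η + f • d1 η)
    (hdd : ∀ f : F, d1 (d f) = 0)
    (u t : F)
    (H : Matrix (Fin 2) (Fin 2) Ω)
    (hH : H = !![0, 0; (u * t * (1 + t))⁻¹ • d t, u⁻¹ • d u + (2 * t)⁻¹ • d t]) :
    ∀ i j, d1 (H i j) + ∑ k, w (H i k) (H k j) = 0 := by
  have hd1 := d1_smul_d hleib hdd
  have hflat : curvature d1 w H = 0 := by
    rw [hH, curvature_of_zero_row d1 halt, d1_smul_d_add_wedge_eq_zero halt hd1,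
      d1_inv_smul_d_add_inv_two_mul_smul_d_eq_zero halt hd1]
    ext i j
    fin_cases i <;> fin_cases j <;> rfl
  exact fun i j => congrFun₂ hflat i j

/-- the connection matrix `H = [[0,0],[dt/(ut(1+t)), du/u + dt/(2t)]]`
satisfies the integrability condition `dH + H∧H = 0`, entrywise. Formalized with
an abstract de Rham datum on a characteristic-zero field `F` (such as `K(u,t)`). -/
theorem stmt7 (F : Type*) [Field F] [CharZero F]
    (Ω Ω2 : Type*) [AddCommGroup Ω] [Module F Ω] [AddCommGroup Ω2] [Module F Ω2]
    (d : Derivation ℤ F Ω)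
    (w : Ω →ₗ[F] Ω →ₗ[F] Ω2) (halt : ∀ η : Ω, w η η = 0)
    (d1 : Ω →+ Ω2)
    (hleib : ∀ (f : F) (η : Ω), d1 (f • η) = w (d f) η + f • d1 η)
    (hdd : ∀ f : F, d1 (d f) = 0)
    (u t : F) (hu : u ≠ 0) (ht : t ≠ 0) (ht1 : 1 + t ≠ 0)
    (H : Matrix (Fin 2) (Fin 2) Ω)
    (hH : H = !![0, 0; (u * t * (1 + t))⁻¹ • d t, u⁻¹ • d u + (2 * t)⁻¹ • d t]) :
    ∀ i j, d1 (H i j) + ∑ k, w (H i k) (H k j) = 0 :=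
  stmt7_general F Ω Ω2 d w halt d1 hleib hdd u t H hH
end

section
/- In the module of Kähler log-differentials generated by symbols dlog(u), dlog(v), dlog(u+v) over K[u,v] subject to the single relation u·dlog(u) + v·dlog(v) = (u+v)·dlog(u+v), the element α = dlog(u) + dlog(v) - 2·dlog(u+v) is not divisible by (u-v); i.e. there is no element β of the module with (u-v)·β = α. -/
open MvPolynomial

/-- in the `K[u,v]`-module `M` generated by `dlog(u)`, `dlog(v)`,
`dlog(u+v)` subject to the single relation
`u·dlog(u) + v·dlog(v) = (u+v)·dlog(u+v)` (so `M` is the quotient of the free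
module of rank 3 by the span of `(u, v, -(u+v))`), the element
`α = dlog(u) + dlog(v) - 2·dlog(u+v)` is not divisible by `u - v`. -/
theorem stmt13 (K : Type*) [Field K] [CharZero K] :
    ¬ ∃ β : (Fin 3 → MvPolynomial (Fin 2) K) ⧸
        Submodule.span (MvPolynomial (Fin 2) K)
          {(![X 0, X 1, -(X 0 + X 1)] : Fin 3 → MvPolynomial (Fin 2) K)},
      (X 0 - X 1 : MvPolynomial (Fin 2) K) • β =
        Submodule.Quotient.mk ![1, 1, -2] := by
  rintro ⟨β, hβ⟩
  obtain ⟨a, rfl⟩ := Submodule.Quotient.mk_surjective _ β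
  rw [← Submodule.Quotient.mk_smul, Submodule.Quotient.eq] at hβ
  rw [Submodule.mem_span_singleton] at hβ
  obtain ⟨p, hp⟩ := hβ
  have h0 := congrFun hp 0
  simp only [Pi.smul_apply, Pi.sub_apply, Matrix.cons_val_zero, smul_eq_mul] at h0
  have := congrArg (MvPolynomial.eval (0 : Fin 2 → K)) h0
  simp at this
end

section
/- For the connection d + G on the trivial rank-2 bundle with G = [[0,0],[ω, du/(2u)+dv/(2v)]], ω = (udv-vdu)/(uv(u+v)), the pullback along the curve u = s, v = νs² (ν ≠ 0) has connection matrix [[0,0],[ds/(s²(1+νs)), (3/2)ds/s]], which has a pole of order 2 at s = 0. -/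
/-! Along `u = s`, `v = ν s²` with `dν = 0` one has `dv = 2νs ds`, so `u dv - v du = νs² ds`,
which cancels the factor `v` of the denominator of `ω`, and `dv / v = 2 ds / s`. -/

namespace Derivation

section CommRing

variable {R A M : Type*} [CommSemiring R] [CommRing A] [Algebra R A] [AddCommGroup M]
  [Module A M] [Module R M] (D : Derivation R A M) {c : A}

theorem map_const_mul_pow_succ (hc : D c = 0) (x : A) (n : ℕ) :
    D (c * x ^ (n + 1)) = ((n + 1) * c * x ^ n) • D x := by
  rw [leibniz, hc, smul_zero, add_zero, leibniz_pow, Nat.add_sub_cancel,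
    ← Nat.cast_smul_eq_nsmul A, smul_smul, smul_smul]
  push_cast
  ring_nf

theorem smul_map_const_mul_pow_succ_sub (hc : D c = 0) (x : A) (n : ℕ) :
    x • D (c * x ^ (n + 1)) - (c * x ^ (n + 1)) • D x = (n * c * x ^ (n + 1)) • D x := by
  rw [D.map_const_mul_pow_succ hc, smul_smul, ← sub_smul]
  congr 1
  ring

end CommRing

variable {R K M : Type*} [CommSemiring R] [Field K] [Algebra R K] [AddCommGroup M] [Module K M]
  [Module R M] (D : Derivation R K M) {c : K}

theorem inv_smul_map_const_mul_pow_succ (hc : D c = 0) (hc₀ : c ≠ 0) {x : K} (hx : x ≠ 0)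
    (n : ℕ) : (c * x ^ (n + 1))⁻¹ • D (c * x ^ (n + 1)) = ((n + 1) / x) • D x := by
  rw [D.map_const_mul_pow_succ hc, smul_smul]
  congr 1
  field_simp
  ring

end Derivation

theorem stmt15_general (F : Type*) [Field F] [CharZero F]
    (Ω : Type*) [AddCommGroup Ω] [Module F Ω]
    (d : Derivation ℤ F Ω)
    (s ν : F) (hs : s ≠ 0) (hν : ν ≠ 0) (hconst : d ν = 0)
    (Gsub : Matrix (Fin 2) (Fin 2) Ω)
    (hGsub : Gsub = !![0, 0;
      (s * (ν * s ^ 2) * (s + ν * s ^ 2))⁻¹ •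
        (s • d (ν * s ^ 2) - (ν * s ^ 2) • d s),
      (2 * s)⁻¹ • d s + (2 * (ν * s ^ 2))⁻¹ • d (ν * s ^ 2)]) :
    Gsub = !![0, 0;
      (s ^ 2 * (1 + ν * s))⁻¹ • d s, (3 / (2 * s)) • d s] := by
  have hv : ν * s ^ 2 ≠ 0 := by positivity
  have hω : (s * (ν * s ^ 2) * (s + ν * s ^ 2))⁻¹ • (s • d (ν * s ^ 2) - (ν * s ^ 2) • d s) =
      (s ^ 2 * (1 + ν * s))⁻¹ • d s := by
    have hwr : s • d (ν * s ^ 2) - (ν * s ^ 2) • d s = (ν * s ^ 2) • d s := by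
      convert d.smul_map_const_mul_pow_succ_sub hconst s 1 using 2
      rw [Nat.cast_one, one_mul]
    rw [hwr, smul_smul, mul_comm s, mul_assoc, mul_inv, mul_right_comm, inv_mul_cancel₀ hv,
      one_mul]
    congr 2
    ring
  have hlog : (2 * s)⁻¹ • d s + (2 * (ν * s ^ 2))⁻¹ • d (ν * s ^ 2) = (3 / (2 * s)) • d s := by
    have hdlog : (ν * s ^ 2)⁻¹ • d (ν * s ^ 2) = (2 / s) • d s := by
      convert d.inv_smul_map_const_mul_pow_succ hconst hν hs 1 using 3
      norm_num
    rw [mul_inv 2 (ν * s ^ 2), ← smul_smul, hdlog, smul_smul, ← add_smul]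
    congr 1
    field_simp
    norm_num
  rw [hGsub, hω, hlog]

/-- the pullback of the connection matrix
`G = [[0,0],[ω, du/(2u)+dv/(2v)]]`, `ω = (u·dv - v·du)/(uv(u+v))`, along the
curve `u = s`, `v = ν·s²` (ν ≠ 0) is `[[0,0],[ds/(s²(1+νs)), (3/2)·ds/s]]`,
which has a pole of order 2 at `s = 0`. Formalized for any derivation `d` on a
characteristic-zero field `F` (such as `K(s)`), `ν` a nonzero constant; the
pullback substitutes `u = s`, `v = ν·s²` in each entry. -/
theorem stmt15 (F : Type*) [Field F] [CharZero F]
    (Ω : Type*) [AddCommGroup Ω] [Module F Ω]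
    (d : Derivation ℤ F Ω)
    (s ν : F) (hs : s ≠ 0) (hν : ν ≠ 0) (hνs : 1 + ν * s ≠ 0) (hconst : d ν = 0)
    (Gsub : Matrix (Fin 2) (Fin 2) Ω)
    (hGsub : Gsub = !![0, 0;
      (s * (ν * s ^ 2) * (s + ν * s ^ 2))⁻¹ •
        (s • d (ν * s ^ 2) - (ν * s ^ 2) • d s),
      (2 * s)⁻¹ • d s + (2 * (ν * s ^ 2))⁻¹ • d (ν * s ^ 2)]) :
    Gsub = !![0, 0;
      (s ^ 2 * (1 + ν * s))⁻¹ • d s, (3 / (2 * s)) • d s] :=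
  stmt15_general F Ω d s ν hs hν hconst Gsub hGsub
end
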